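/- If ε = 1 in the bilinear form a, then for any τ > 0 the form a is elliptic on V_h with constant α = 1/(1 + C_max²): for all (v_h, ṽ_h) ∈ V_h one has a((v_h,ṽ_h),(v_h,ṽ_h)) ≥ α |||(v_h,ṽ_h)|||². -/

import Mathlib

open MeasureTheory RealInnerProductSpace

noncomputable section

/-! ## Basic geometric and functional analytic framework -/

/-- The Euclidean plane `ℝ²`. -/
abbrev E2 : Type := EuclideanSpace ℝ (Fin 2)

/-- The `i`-th standard basis vector of `ℝ²`. -/
def e2 (i : Fin 2) : E2 := EuclideanSpace.single i 1

/-- Rotation of a vector by `π/2` (used to produce normal vectors). -/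
def rot90 (v : E2) : E2 := EuclideanSpace.single 0 (-(v 1)) + EuclideanSpace.single 1 (v 0)

/-- A (possibly degenerate-free) triangle in the plane, given by its three
affinely independent vertices. -/
structure Tri : Type where
  V : Fin 3 → E2
  indep : AffineIndependent ℝ V

namespace Tri

/-- The closed triangle, as a subset of the plane. -/
def toSet (K : Tri) : Set E2 := convexHull ℝ (Set.range K.V)

/-- `h_K`, the diameter of the triangle `K`. -/
def diam (K : Tri) : ℝ := Metric.diam K.toSet

/-- The radius of the largest ball inscribed in `K`. -/
def inradius (K : Tri) : ℝ := sSup {r : ℝ | ∃ x : E2, Metric.ball x r ⊆ K.toSet}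

/-- The closed edge of `K` opposite to the vertex `i`. -/
def edge (K : Tri) (i : Fin 3) : Set E2 := segment ℝ (K.V (i + 1)) (K.V (i + 2))

/-- The relatively open edge of `K` opposite to the vertex `i`
(the edge without its two endpoints). -/
def edgeO (K : Tri) (i : Fin 3) : Set E2 := K.edge i \ {K.V (i + 1), K.V (i + 2)}

end Tri

/-- Lexicographic positivity of a vector; used to fix a canonical orientation of edges. -/
def lexPos (v : E2) : Prop := 0 < v 0 ∨ (v 0 = 0 ∧ 0 < v 1)

open Classical in
/-- A canonical unit tangent vector of the segment `[a, b]`,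
independent of the order in which the endpoints are given. -/
def canonTangent (a b : E2) : E2 :=
  if lexPos (b - a) then ‖b - a‖⁻¹ • (b - a) else ‖a - b‖⁻¹ • (a - b)

namespace Tri

/-- The unit tangent vector `t` of the edge `i` of `K`. -/
def tangent (K : Tri) (i : Fin 3) : E2 := canonTangent (K.V (i + 1)) (K.V (i + 2))

open Classical in
/-- The outward unit normal vector `n` of the edge `i` of `K`
(one has `n ⬝ t = 0`). -/
def normal (K : Tri) (i : Fin 3) : E2 :=
  if 0 < ⟪‖rot90 (K.V (i + 2) - K.V (i + 1))‖⁻¹ • rot90 (K.V (i + 2) - K.V (i + 1)),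
        K.V i - K.V (i + 1)⟫ then
    -(‖rot90 (K.V (i + 2) - K.V (i + 1))‖⁻¹ • rot90 (K.V (i + 2) - K.V (i + 1)))
  else
    ‖rot90 (K.V (i + 2) - K.V (i + 1))‖⁻¹ • rot90 (K.V (i + 2) - K.V (i + 1))

end Tri

/-- Shape regularity of a triangle with parameter `ρ`: the triangle of a shape-regular
family satisfy `ρ h_K ≤ r_K`, where `r_K` is the inradius. -/
def ShapeRegular (ρ : ℝ) (K : Tri) : Prop := ρ * K.diam ≤ K.inradius

/-- `f` coincides on `S` with a (bivariate) polynomial of total degree at most `d`,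
i.e. `f|_S ∈ P_d(S)`. -/
def IsPolyOn (d : ℕ) (S : Set E2) (f : E2 → ℝ) : Prop :=
  ∃ p : MvPolynomial (Fin 2) ℝ, p.totalDegree ≤ d ∧
    ∀ x ∈ S, f x = MvPolynomial.eval (fun i => x i) p

/-- Vector-valued version of `IsPolyOn`: `v|_S ∈ [P_d(S)]²`. -/
def IsPolyVecOn (d : ℕ) (S : Set E2) (v : E2 → E2) : Prop :=
  ∀ c : Fin 2, IsPolyOn d S (fun x => v x c)

/-- The partial derivative (within `S`) in the `i`-th coordinate direction. -/
def dWi (S : Set E2) (i : Fin 2) (f : E2 → ℝ) : E2 → ℝ :=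
  fun x => fderivWithin ℝ f S x (e2 i)

/-- The iterated partial derivative `∂₀^j ∂₁^l` (within `S`). -/
def pderivW (S : Set E2) (j l : ℕ) (f : E2 → ℝ) : E2 → ℝ :=
  (dWi S 0)^[j] ((dWi S 1)^[l] f)

/-- The squared Sobolev seminorm `|f|²_{H^m(S)} = ∑_{|α| = m} ‖∂^α f‖²_{L²(S)}`. -/
def sobSemiSq (m : ℕ) (S : Set E2) (f : E2 → ℝ) : ℝ :=
  ∑ j ∈ Finset.range (m + 1), ∫ x in S, (pderivW S j (m - j) f x) ^ 2

/-- The Sobolev seminorm `|f|_{H^m(S)}`. -/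
def sobSemi (m : ℕ) (S : Set E2) (f : E2 → ℝ) : ℝ := Real.sqrt (sobSemiSq m S f)

/-- The squared Sobolev seminorm of a vector field, `|v|²_{H^m(S)}`. -/
def sobSemiVecSq (m : ℕ) (S : Set E2) (v : E2 → E2) : ℝ :=
  ∑ c : Fin 2, sobSemiSq m S (fun x => v x c)

/-- The Sobolev seminorm of a vector field, `|v|_{H^m(S)}`. -/
def sobSemiVec (m : ℕ) (S : Set E2) (v : E2 → E2) : ℝ := Real.sqrt (sobSemiVecSq m S v)

/-- Squared `L²(S)` norm. -/
def l2Sq (S : Set E2) (f : E2 → ℝ) : ℝ := ∫ x in S, (f x) ^ 2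

/-- `L²(S)` norm. -/
def l2N (S : Set E2) (f : E2 → ℝ) : ℝ := Real.sqrt (l2Sq S f)

/-- Squared `L²(S)` norm of a vector field. -/
def l2VecSq (S : Set E2) (v : E2 → E2) : ℝ := ∫ x in S, ‖v x‖ ^ 2

/-- `L²(S)` norm of a vector field. -/
def l2VecN (S : Set E2) (v : E2 → E2) : ℝ := Real.sqrt (l2VecSq S v)

/-- The full Sobolev norm `‖f‖_{H^m(S)}`. -/
def hmNorm (m : ℕ) (S : Set E2) (f : E2 → ℝ) : ℝ :=
  Real.sqrt (∑ j ∈ Finset.range (m + 1), sobSemiSq j S f)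

/-- The full Sobolev norm `‖v‖_{H^m(S)}` of a vector field. -/
def hmNormVec (m : ℕ) (S : Set E2) (v : E2 → E2) : ℝ :=
  Real.sqrt (∑ j ∈ Finset.range (m + 1), sobSemiVecSq j S v)

/-- The squared `L²(∂K)` norm: the boundary of a triangle is the union of its three edges,
and carries the one-dimensional Hausdorff (arc-length) measure. -/
def bdrySq (K : Tri) (f : E2 → ℝ) : ℝ :=
  ∑ i : Fin 3, ∫ x in K.edge i, (f x) ^ 2 ∂(μH[1])

/-- The `L²(∂K)` norm. -/
def bdryN (K : Tri) (f : E2 → ℝ) : ℝ := Real.sqrt (bdrySq K f)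

/-! ## Projection and interpolation operators -/

open Classical in
/-- The `L²(S, μ)`-orthogonal projection onto polynomials of degree at most `d` on `S`,
characterised by the orthogonality relation `∫_S (f - Pf) q dμ = 0` for all `q ∈ P_d(S)`. -/
def l2Proj (d : ℕ) (S : Set E2) (μ : Measure E2) (f : E2 → ℝ) : E2 → ℝ :=
  Classical.epsilon fun g => IsPolyOn d S g ∧
    ∀ q : E2 → ℝ, IsPolyOn d S q → ∫ x in S, (f x - g x) * q x ∂μ = 0

/-- The `L²(E)`-orthogonal projection `Φ^d_E` onto `P_d(E)` on an edge `E`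
(with respect to the arc-length measure). -/
def edgeProj (d : ℕ) (E : Set E2) (f : E2 → ℝ) : E2 → ℝ := l2Proj d E μH[1] f

/-- The local `L²(K)`-orthogonal projection `Ψ^d_K` onto `P_d(K)`. -/
def elemProj (d : ℕ) (K : Tri) (f : E2 → ℝ) : E2 → ℝ := l2Proj d K.toSet volume f

/-- Gradient within `S`. -/
def gradW (S : Set E2) (f : E2 → ℝ) (x : E2) : E2 := ∑ i : Fin 2, dWi S i f x • e2 i

/-- Divergence within `S`. -/
def divW (S : Set E2) (v : E2 → E2) (x : E2) : ℝ :=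
  ∑ i : Fin 2, ⟪fderivWithin ℝ v S x (e2 i), e2 i⟫

open Classical in
/-- The canonical local Brezzi-Douglas-Marini interpolation operator `Π^k` on a
triangle `K`, characterised by its degrees of freedom: `Π^k v ∈ [P_k(K)]²` with
* matching moments of the normal component against `P_k(E)` on every edge `E`;
* matching interior moments against gradients of `P_{k-1}(K)`;
* matching interior moments against divergence-free fields in `[P_k(K)]²` whose
  normal component vanishes on `∂K`. -/
def bdmInterp (k : ℕ) (K : Tri) (v : E2 → E2) : E2 → E2 :=
  Classical.epsilon fun w => IsPolyVecOn k Set.univ w ∧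
    (∀ i : Fin 3, ∀ q : E2 → ℝ, IsPolyOn k Set.univ q →
      ∫ x in K.edge i, ⟪w x - v x, K.normal i⟫ * q x ∂(μH[1]) = 0) ∧
    (∀ q : E2 → ℝ, IsPolyOn (k - 1) Set.univ q →
      ∫ x in K.toSet, ⟪w x - v x, gradW Set.univ q x⟫ = 0) ∧
    (∀ z : E2 → E2, IsPolyVecOn k Set.univ z → (∀ x : E2, divW Set.univ z x = 0) →
      (∀ i : Fin 3, ∀ x ∈ K.edge i, ⟪z x, K.normal i⟫ = 0) →
      ∫ x in K.toSet, ⟪w x - v x, z x⟫ = 0)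

/-! ## Triangulations, discrete spaces, bilinear forms and mesh-dependent norms -/

/-- A conforming triangulation `T_h` of a bounded open polygonal domain `Ω ⊂ ℝ²`. -/
structure Mesh : Type where
  /-- the computational domain `Ω` -/
  Ω : Set E2
  /-- the triangles of the triangulation -/
  T : Finset Tri
  isOpen_Ω : IsOpen Ω
  nonempty_Ω : Ω.Nonempty
  bounded_Ω : Bornology.IsBounded Ω
  connected_Ω : IsConnected Ω
  /-- the triangles cover the closure of `Ω` -/
  cover : (⋃ K ∈ T, Tri.toSet K) = closure Ω
  /-- distinct triangles have disjoint interiors -/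
  disjoint_interiors : ∀ K ∈ T, ∀ K' ∈ T, K ≠ K' →
    interior (Tri.toSet K) ∩ interior (Tri.toSet K') = ∅
  /-- the triangulation is conforming: two distinct triangles intersect in nothing,
  a common vertex, or a common (full) edge -/
  conforming : ∀ K ∈ T, ∀ K' ∈ T, K ≠ K' →
    (Tri.toSet K ∩ Tri.toSet K' = ∅) ∨
    (∃ a : E2, Tri.toSet K ∩ Tri.toSet K' = {a} ∧ a ∈ Set.range K.V ∧ a ∈ Set.range K'.V) ∨
    (∃ i j, Tri.toSet K ∩ Tri.toSet K' = Tri.edge K i ∧ Tri.edge K i = Tri.edge K' j)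
  /-- every edge either lies on the boundary `Γ = ∂Ω`, or is shared with exactly
  one other triangle -/
  edge_dichotomy : ∀ K ∈ T, ∀ i : Fin 3,
    Tri.edge K i ⊆ frontier Ω ∨
    ∃ K' ∈ T, K' ≠ K ∧ ∃ j : Fin 3, Tri.edge K' j = Tri.edge K i

/-- A broken (elementwise) vector field: the discrete velocities and the broken
Sobolev functions are represented by their restrictions to each element. -/
abbrev Vb : Type := Tri → E2 → E2

/-- Membership in the Brezzi-Douglas-Marini space
`BDM_h^k = {v ∈ H(div, Ω) : v|_K ∈ [P_k(K)]² ∀ K ∈ T_h}`: each piece is a polynomial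
of degree at most `k` and the normal component is continuous across interelement
edges (which is equivalent to `H(div)`-conformity for piecewise polynomials). -/
def MemBDM (M : Mesh) (k : ℕ) (v : Vb) : Prop :=
  (∀ K ∈ M.T, IsPolyVecOn k (Tri.toSet K) (v K)) ∧
  (∀ K ∈ M.T, ∀ K' ∈ M.T, ∀ i j, Tri.edge K i = Tri.edge K' j →
    ∀ x ∈ Tri.edge K i, ⟪v K x, Tri.normal K i⟫ = ⟪v K' x, Tri.normal K i⟫)

/-- Membership in the Lagrange multiplier space
`M_h^d = {g ∈ L²(E_h) : g|_E ∈ P_d(E) ∀ E ∈ E_h}` (the multiplier lives on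
the skeleton; the values at the finitely many vertices are irrelevant). -/
def MemM (M : Mesh) (d : ℕ) (g : E2 → ℝ) : Prop :=
  ∀ K ∈ M.T, ∀ i : Fin 3, IsPolyOn d (Tri.edgeO K i) g

/-- Membership in `M_{h,0}^d = {g ∈ M_h^d : g = 0 on Γ}`. -/
def MemM0 (M : Mesh) (d : ℕ) (g : E2 → ℝ) : Prop :=
  MemM M d g ∧ ∀ x ∈ frontier M.Ω, g x = 0

/-- Membership in the (discontinuous) pressure space
`Q_h^d = {q ∈ L²(Ω) : q|_K ∈ P_d(K) ∀ K ∈ T_h}`. -/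
def MemQ (M : Mesh) (d : ℕ) (q : E2 → ℝ) : Prop :=
  ∀ K ∈ M.T, IsPolyOn d (interior (Tri.toSet K)) q

/-- `f ∈ L²(S)`. -/
def MemL2 (S : Set E2) (f : E2 → ℝ) : Prop := MemLp f 2 (volume.restrict S)

/-- `v ∈ [L²(S)]²`. -/
def MemL2Vec (S : Set E2) (v : E2 → E2) : Prop := MemLp v 2 (volume.restrict S)

/-- `g ∈ L²(E_h)`: square integrable on every edge of the triangulation. -/
def MemL2Edges (M : Mesh) (g : E2 → ℝ) : Prop :=
  ∀ K ∈ M.T, ∀ i : Fin 3, MemLp g 2 (μH[1].restrict (Tri.edge K i))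

/-- `g ∈ L²(Γ)`. -/
def MemL2Bdry (M : Mesh) (g : E2 → ℝ) : Prop :=
  MemLp g 2 (μH[1].restrict (frontier M.Ω))

/-- A broken vector field in `[H¹(Ω) ∩ H^m(T_h)]²` (strong form): each piece has
`m` continuous derivatives up to the boundary of its element, and the pieces agree
on interelement boundaries (`H¹(Ω)`-conformity). -/
def MemH1Hm (M : Mesh) (m : ℕ) (u : Vb) : Prop :=
  (∀ K ∈ M.T, ∀ c : Fin 2, ContDiffOn ℝ m (fun x => u K x c) (Tri.toSet K)) ∧
  (∀ K ∈ M.T, ∀ K' ∈ M.T, ∀ x ∈ Tri.toSet K ∩ Tri.toSet K', u K x = u K' x)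

/-- The tangential component `(v)_t` of `v` on the edge `i` of `K`. -/
def tComp (K : Tri) (i : Fin 3) (v : E2 → E2) : E2 → ℝ := fun x => ⟪v x, K.tangent i⟫

/-- The tangential component `(∂_n v)_t` of the normal derivative of `v`
on the edge `i` of `K` (the trace is taken from inside `K`). -/
def dnt (K : Tri) (i : Fin 3) (v : E2 → E2) : E2 → ℝ :=
  fun x => ⟪fderivWithin ℝ v (Tri.toSet K) x (K.normal i), K.tangent i⟫

/-- The hdG velocity bilinear form `a((w, w̃), (v, ṽ))` with viscosity `ν`,
stabilisation parameter `τ` and symmetry parameter `ε ∈ {-1, 1}`. -/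
def aForm (M : Mesh) (k : ℕ) (ν τ ε : ℝ) (w : Vb) (wt : E2 → ℝ) (v : Vb) (vt : E2 → ℝ) : ℝ :=
  ∑ K ∈ M.T,
    ((∫ x in Tri.toSet K, ν * ∑ c : Fin 2,
        ⟪fderivWithin ℝ (w K) (Tri.toSet K) x (e2 c),
          fderivWithin ℝ (v K) (Tri.toSet K) x (e2 c)⟫)
      - ∑ i : Fin 3, ∫ x in Tri.edge K i,
          ν * dnt K i (w K) x * (tComp K i (v K) x - vt x) ∂(μH[1])
      + ε * ∑ i : Fin 3, ∫ x in Tri.edge K i,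
          ν * (tComp K i (w K) x - wt x) * dnt K i (v K) x ∂(μH[1])
      + ν * (τ / K.diam) * ∑ i : Fin 3, ∫ x in Tri.edge K i,
          edgeProj (k - 1) (Tri.edge K i) (fun y => tComp K i (w K) y - wt y) x *
            edgeProj (k - 1) (Tri.edge K i) (fun y => tComp K i (v K) y - vt y) x ∂(μH[1]))

/-- The hdG pressure-velocity bilinear form `b((v, ṽ), q) = -∑_K ∫_K q ∇⬝v`. -/
def bForm (M : Mesh) (v : Vb) (q : E2 → ℝ) : ℝ :=
  - ∑ K ∈ M.T, ∫ x in Tri.toSet K, q x * divW (Tri.toSet K) (v K) x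

/-- The squared mesh-dependent norm
`|||(w, w̃)|||² = ν ∑_K (|w|²_{H¹(K)} + h_K ‖∂_n w‖²_{∂K} + (τ/h_K) ‖Φ^{k-1}((w)_t - w̃)‖²_{∂K})`. -/
def tnormSq (M : Mesh) (k : ℕ) (ν τ : ℝ) (w : Vb) (wt : E2 → ℝ) : ℝ :=
  ν * ∑ K ∈ M.T,
    (sobSemiVecSq 1 (Tri.toSet K) (w K)
      + K.diam * ∑ i : Fin 3, ∫ x in Tri.edge K i,
          ‖fderivWithin ℝ (w K) (Tri.toSet K) x (K.normal i)‖ ^ 2 ∂(μH[1])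
      + (τ / K.diam) * ∑ i : Fin 3, ∫ x in Tri.edge K i,
          (edgeProj (k - 1) (Tri.edge K i) (fun y => tComp K i (w K) y - wt y) x) ^ 2 ∂(μH[1]))

/-- The mesh-dependent norm `|||(w, w̃)|||`. -/
def tnorm (M : Mesh) (k : ℕ) (ν τ : ℝ) (w : Vb) (wt : E2 → ℝ) : ℝ :=
  Real.sqrt (tnormSq M k ν τ w wt)

/-- The full triple norm `|||(w, w̃, r)|||_h = |||(w, w̃)||| + ν^{-1/2} ‖r‖_{L²(Ω)}`. -/
def tnormH (M : Mesh) (k : ℕ) (ν τ : ℝ) (w : Vb) (wt : E2 → ℝ) (r : E2 → ℝ) : ℝ :=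
  tnorm M k ν τ w wt + (Real.sqrt ν)⁻¹ * l2N M.Ω r

/-- `Cmax` is a constant for the discrete trace inequality
`h_K^{1/2} ‖p‖_{L²(∂K)} ≤ Cmax ‖p‖_{L²(K)}` for polynomials `p` of degree ≤ `k`
on the elements of the mesh `M`. -/
def TraceConst (M : Mesh) (k : ℕ) (Cmax : ℝ) : Prop :=
  0 < Cmax ∧ ∀ K ∈ M.T, ∀ f : E2 → ℝ, IsPolyOn k Set.univ f →
    Real.sqrt K.diam * bdryN K f ≤ Cmax * l2N (Tri.toSet K) f

/-- The global BDM interpolation operator, acting elementwise. -/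
def meshBDM (M : Mesh) (k : ℕ) (v : E2 → E2) : Vb := fun K => bdmInterp k K v

/-- The mesh size `h = max_K h_K`. -/
def meshSize (M : Mesh) : ℝ := sSup (Tri.diam '' (M.T : Set Tri))

/-- The broken Sobolev norm `‖u‖_{H^m(T_h)}` of a broken vector field. -/
def brokenNormVec (M : Mesh) (m : ℕ) (u : Vb) : ℝ :=
  Real.sqrt (∑ K ∈ M.T, ∑ j ∈ Finset.range (m + 1), sobSemiVecSq j (Tri.toSet K) (u K))

/-- The broken Sobolev norm `‖p‖_{H^m(T_h)}` of a scalar function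
(the pressure may jump across edges, so each piece is measured on the open element). -/
def brokenNorm (M : Mesh) (m : ℕ) (p : E2 → ℝ) : ℝ :=
  Real.sqrt (∑ K ∈ M.T, ∑ j ∈ Finset.range (m + 1), sobSemiSq j (interior (Tri.toSet K)) p)

/-!
With `ε = 1` the consistency term and the symmetry term of `a((v, ṽ), (v, ṽ))` coincide and
cancel, so on every element `K` only `ν |v|²_{H¹(K)}` and the stabilisation term
`ν (τ / h_K) ‖Φ^{k-1}((v)_t - ṽ)‖²_{∂K}` remain. The one contribution to `|||(v, ṽ)|||²` that
is missing is `ν h_K ‖∂_n v‖²_{∂K}`. Pointwise `|∂_n v|² ≤ |∇v|²`, and the entries of `∇v` are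
polynomials of degree at most `k` on `K`, so the discrete trace inequality bounds this term by
`ν C_max² |v|²_{H¹(K)}`. Summing over the elements gives
`|||(v, ṽ)|||² ≤ (1 + C_max²) a((v, ṽ), (v, ṽ))`.
-/

namespace MvPolynomial

variable {ι : Type*} [Fintype ι]

theorem hasFDerivAt_eval_euclidean (p : MvPolynomial ι ℝ) (x : EuclideanSpace ℝ ι) :
    HasFDerivAt (fun y : EuclideanSpace ℝ ι => eval (fun i => y i) p)
      (∑ i, eval (fun j => x j) (pderiv i p) • EuclideanSpace.proj (𝕜 := ℝ) i) x := by
  classical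
  induction p using MvPolynomial.induction_on with
  | C a =>
    simp only [eval_C, pderiv_C, map_zero, zero_smul, Finset.sum_const_zero]
    exact hasFDerivAt_const a x
  | add p q hp hq =>
    simp only [map_add, add_smul, Finset.sum_add_distrib]
    exact hp.add hq
  | mul_X p i hp =>
    simp only [eval_mul, eval_X]
    refine (hp.mul (EuclideanSpace.proj (𝕜 := ℝ) i).hasFDerivAt).congr_fderiv ?_
    ext u
    simp [Derivation.leibniz, pderiv_X, Pi.single_apply, Finset.sum_add_distrib, add_mul,
      Finset.mul_sum, mul_assoc, apply_ite (eval _), ite_mul]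

theorem totalDegree_pderiv_le {σ R : Type*} [CommSemiring R] (i : σ) (p : MvPolynomial σ R) :
    (pderiv i p).totalDegree ≤ p.totalDegree := by
  classical
  conv_lhs => rw [p.as_sum]
  rw [map_sum]
  refine (totalDegree_finsetSum _ _).trans (Finset.sup_le fun m hm => ?_)
  rw [pderiv_monomial]
  exact (totalDegree_monomial_le _ _).trans
    ((Finsupp.degree_mono tsub_le_self).trans (le_totalDegree hm))

end MvPolynomial

namespace IsPolyOn

variable {d : ℕ} {S : Set E2} {f : E2 → ℝ}

theorem differentiableWithinAt (hf : IsPolyOn d S f) {x : E2} (hx : x ∈ S) :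
    DifferentiableWithinAt ℝ f S x := by
  obtain ⟨p, -, hp⟩ := hf
  exact ((MvPolynomial.hasFDerivAt_eval_euclidean p x).hasFDerivWithinAt.congr hp
    (hp x hx)).differentiableWithinAt

theorem continuousOn (hf : IsPolyOn d S f) : ContinuousOn f S :=
  fun _ hx => (hf.differentiableWithinAt hx).continuousWithinAt

theorem dWi (hf : IsPolyOn d S f) (hS : UniqueDiffOn ℝ S) (i : Fin 2) :
    IsPolyOn d S (dWi S i f) := by
  obtain ⟨p, hdeg, hp⟩ := hf
  refine ⟨MvPolynomial.pderiv i p, (MvPolynomial.totalDegree_pderiv_le i p).trans hdeg,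
    fun x hx => ?_⟩
  rw [_root_.dWi, ((MvPolynomial.hasFDerivAt_eval_euclidean p x).hasFDerivWithinAt.congr hp
    (hp x hx)).fderivWithin (hS x hx)]
  fin_cases i <;> simp [e2]

theorem integrableOn_sq (hf : IsPolyOn d S f) (hS : IsCompact S) {T : Set E2}
    (hT : MeasurableSet T) (hTS : T ⊆ S) {μ : Measure E2} (hμ : μ T ≠ ⊤) :
    IntegrableOn (fun x => f x ^ 2) T μ :=
  (hf.continuousOn.pow 2).integrableOn_of_subset_isCompact hS hT hTS hμ

end IsPolyOn

theorem integral_finsetSum_finsetSum {α ι κ : Type*} [MeasurableSpace α] {μ : Measure α}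
    (s : Finset ι) (t : Finset κ) {f : ι → κ → α → ℝ} (hf : ∀ i j, Integrable (f i j) μ) :
    ∫ x, ∑ i ∈ s, ∑ j ∈ t, f i j x ∂μ = ∑ i ∈ s, ∑ j ∈ t, ∫ x, f i j x ∂μ := by
  rw [integral_finsetSum _ fun i _ => integrable_finsetSum _ fun j _ => hf i j]
  exact Finset.sum_congr rfl fun i _ => integral_finsetSum _ fun j _ => hf i j

section EuclideanSpace

variable {ι F : Type*} [Fintype ι] [NormedAddCommGroup F] [NormedSpace ℝ F]

theorem fderivWithin_euclidean_apply {f : F → EuclideanSpace ℝ ι} {s : Set F} {x : F}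
    (hf : DifferentiableWithinAt ℝ f s x) (hs : UniqueDiffWithinAt ℝ s x) (u : F) (i : ι) :
    fderivWithin ℝ (fun y => f y i) s x u = fderivWithin ℝ f s x u i :=
  congrArg (· u) ((hasFDerivWithinAt_euclidean.1 hf.hasFDerivWithinAt i).fderivWithin hs)

variable [DecidableEq ι]

theorem ContinuousLinearMap.norm_apply_sq_le_sum_single (L : EuclideanSpace ℝ ι →L[ℝ] F)
    (u : EuclideanSpace ℝ ι) :
    ‖L u‖ ^ 2 ≤ ‖u‖ ^ 2 * ∑ c, ‖L (EuclideanSpace.single c 1)‖ ^ 2 := by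
  have hu : L u = ∑ c, u c • L (EuclideanSpace.single c 1) := by
    conv_lhs => rw [← (EuclideanSpace.basisFun ι ℝ).sum_repr u]
    simp
  have hle : ‖L u‖ ≤ ∑ c, |u c| * ‖L (EuclideanSpace.single c 1)‖ := by
    rw [hu]
    refine (norm_sum_le _ _).trans_eq ?_
    simp [norm_smul]
  calc ‖L u‖ ^ 2 ≤ (∑ c, |u c| * ‖L (EuclideanSpace.single c 1)‖) ^ 2 :=
        pow_le_pow_left₀ (norm_nonneg _) hle 2
    _ ≤ (∑ c, |u c| ^ 2) * ∑ c, ‖L (EuclideanSpace.single c 1)‖ ^ 2 :=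
        Finset.sum_mul_sq_le_sq_mul_sq _ _ _
    _ = ‖u‖ ^ 2 * ∑ c, ‖L (EuclideanSpace.single c 1)‖ ^ 2 := by
        simp [EuclideanSpace.real_norm_sq_eq]

end EuclideanSpace

theorem norm_rot90 (w : E2) : ‖rot90 w‖ = ‖w‖ := by
  simp only [EuclideanSpace.norm_eq, rot90, Fin.sum_univ_two]
  simp [add_comm]

namespace Tri

variable (K : Tri)

theorem diam_nonneg : 0 ≤ K.diam := Metric.diam_nonneg

theorem isCompact_toSet : IsCompact K.toSet := (Set.finite_range K.V).isCompact_convexHull ℝ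

theorem uniqueDiffOn_toSet : UniqueDiffOn ℝ K.toSet := by
  refine uniqueDiffOn_convex (convex_convexHull ℝ _) ?_
  rw [Tri.toSet, interior_convexHull_nonempty_iff_affineSpan_eq_top,
    K.indep.affineSpan_eq_top_iff_card_eq_finrank_add_one]
  simp

theorem edge_subset_toSet (i : Fin 3) : K.edge i ⊆ K.toSet :=
  (convex_convexHull ℝ _).segment_subset (subset_convexHull ℝ _ (Set.mem_range_self _))
    (subset_convexHull ℝ _ (Set.mem_range_self _))

theorem measurableSet_edge (i : Fin 3) : MeasurableSet (K.edge i) := by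
  rw [Tri.edge, ← convexHull_pair]
  exact ((Set.toFinite _).isCompact_convexHull ℝ).isClosed.measurableSet

theorem hausdorffMeasure_edge_ne_top (i : Fin 3) : μH[1] (K.edge i) ≠ ⊤ := by
  rw [Tri.edge, hausdorffMeasure_segment]
  exact edist_ne_top _ _

theorem norm_normal (i : Fin 3) : ‖K.normal i‖ = 1 := by
  have hV : K.V (i + 2) - K.V (i + 1) ≠ 0 :=
    sub_ne_zero.2 fun h => absurd (add_left_cancel (K.indep.injective h)) (by decide)
  have hw : ‖rot90 (K.V (i + 2) - K.V (i + 1))‖ ≠ 0 := by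
    rwa [norm_rot90, norm_ne_zero_iff]
  rw [Tri.normal]
  split_ifs <;> simp [norm_smul, hw]

end Tri

theorem l2Sq_nonneg (S : Set E2) (f : E2 → ℝ) : 0 ≤ l2Sq S f :=
  integral_nonneg fun _ => sq_nonneg _

theorem bdrySq_nonneg (K : Tri) (f : E2 → ℝ) : 0 ≤ bdrySq K f :=
  Finset.sum_nonneg fun _ _ => integral_nonneg fun _ => sq_nonneg _

theorem sobSemiVecSq_one (S : Set E2) (v : E2 → E2) :
    sobSemiVecSq 1 S v = ∑ d : Fin 2, ∑ c : Fin 2, l2Sq S (dWi S c fun y => v y d) := by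
  simp [sobSemiVecSq, sobSemiSq, pderivW, l2Sq, Finset.sum_range_succ, Fin.sum_univ_two, add_comm]

theorem TraceConst.diam_mul_bdrySq_le {M : Mesh} {k : ℕ} {Cmax : ℝ} (hC : TraceConst M k Cmax)
    {K : Tri} (hK : K ∈ M.T) {f : E2 → ℝ} (hf : IsPolyOn k K.toSet f) :
    K.diam * bdrySq K f ≤ Cmax ^ 2 * l2Sq K.toSet f := by
  obtain ⟨p, hdeg, hp⟩ := hf
  set g : E2 → ℝ := fun x => MvPolynomial.eval (fun i => x i) p
  have hbdry : bdrySq K f = bdrySq K g :=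
    Finset.sum_congr rfl fun i _ => setIntegral_congr_fun (K.measurableSet_edge i)
      fun x hx => by rw [hp x (K.edge_subset_toSet i hx)]
  have hl2 : l2Sq K.toSet f = l2Sq K.toSet g :=
    setIntegral_congr_fun K.isCompact_toSet.measurableSet fun x hx => by rw [hp x hx]
  have h := pow_le_pow_left₀ (mul_nonneg (Real.sqrt_nonneg _) (Real.sqrt_nonneg _))
    (hC.2 K hK g ⟨p, hdeg, fun _ _ => rfl⟩) 2
  simp only [l2N, mul_pow, Real.sq_sqrt K.diam_nonneg, Real.sq_sqrt (bdrySq_nonneg K g),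
    Real.sq_sqrt (l2Sq_nonneg _ g)] at h
  rwa [hbdry, hl2]

section PolynomialField

variable {k : ℕ} {S : Set E2} {v : E2 → E2}

theorem IsPolyVecOn.sum_norm_fderivWithin_sq (hv : IsPolyVecOn k S v) (hS : UniqueDiffOn ℝ S)
    {x : E2} (hx : x ∈ S) :
    ∑ c : Fin 2, ‖fderivWithin ℝ v S x (e2 c)‖ ^ 2
      = ∑ d : Fin 2, ∑ c : Fin 2, (dWi S c (fun y => v y d) x) ^ 2 := by
  have hdiff : DifferentiableWithinAt ℝ v S x :=
    differentiableWithinAt_euclidean.2 fun d => (hv d).differentiableWithinAt hx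
  simp only [EuclideanSpace.real_norm_sq_eq, dWi,
    fderivWithin_euclidean_apply hdiff (hS x hx)]
  exact Finset.sum_comm

theorem IsPolyVecOn.integral_sum_inner_fderivWithin (hv : IsPolyVecOn k S v) (hS : IsCompact S)
    (hS' : UniqueDiffOn ℝ S) :
    ∫ x in S, ∑ c : Fin 2, ⟪fderivWithin ℝ v S x (e2 c), fderivWithin ℝ v S x (e2 c)⟫
      = sobSemiVecSq 1 S v := by
  have hint : ∀ c d, IntegrableOn (fun x => dWi S c (fun y => v y d) x ^ 2) S :=
    fun c d => ((hv d).dWi hS' c).integrableOn_sq hS hS.measurableSet subset_rfl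
      hS.measure_lt_top.ne
  simp only [real_inner_self_eq_norm_sq]
  rw [setIntegral_congr_fun hS.measurableSet fun x hx => hv.sum_norm_fderivWithin_sq hS' hx,
    integral_finsetSum_finsetSum _ _ fun d c => hint c d, sobSemiVecSq_one]
  rfl

end PolynomialField

theorem TraceConst.diam_mul_sum_integral_norm_fderivWithin_normal_sq_le {M : Mesh} {k : ℕ}
    {Cmax : ℝ} (hC : TraceConst M k Cmax) {K : Tri} (hK : K ∈ M.T) {v : E2 → E2}
    (hv : IsPolyVecOn k K.toSet v) :
    K.diam * ∑ i : Fin 3, ∫ x in K.edge i,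
        ‖fderivWithin ℝ v K.toSet x (K.normal i)‖ ^ 2 ∂μH[1]
      ≤ Cmax ^ 2 * sobSemiVecSq 1 K.toSet v := by
  set g : Fin 2 → Fin 2 → E2 → ℝ := fun c d => dWi K.toSet c fun y => v y d
  have hg : ∀ c d, IsPolyOn k K.toSet (g c d) := fun c d => (hv d).dWi K.uniqueDiffOn_toSet c
  have hint : ∀ i c d, IntegrableOn (fun x => g c d x ^ 2) (K.edge i) μH[1] := fun i c d =>
    (hg c d).integrableOn_sq K.isCompact_toSet (K.measurableSet_edge i)
      (K.edge_subset_toSet i) (K.hausdorffMeasure_edge_ne_top i)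
  have hedge : ∀ i, ∫ x in K.edge i, ‖fderivWithin ℝ v K.toSet x (K.normal i)‖ ^ 2 ∂μH[1]
      ≤ ∑ d, ∑ c, ∫ x in K.edge i, g c d x ^ 2 ∂μH[1] := by
    intro i
    rw [← integral_finsetSum_finsetSum _ _ fun d c => hint i c d]
    refine integral_mono_of_nonneg (ae_of_all _ fun x => sq_nonneg _)
      (integrable_finsetSum _ fun d _ => integrable_finsetSum _ fun c _ => hint i c d)
      (ae_restrict_of_forall_mem (K.measurableSet_edge i) fun x hx => ?_)
    calc ‖fderivWithin ℝ v K.toSet x (K.normal i)‖ ^ 2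
        ≤ ‖K.normal i‖ ^ 2 * ∑ c, ‖fderivWithin ℝ v K.toSet x (e2 c)‖ ^ 2 :=
          (fderivWithin ℝ v K.toSet x).norm_apply_sq_le_sum_single _
      _ = ∑ d, ∑ c, g c d x ^ 2 := by
          rw [K.norm_normal, one_pow, one_mul,
            hv.sum_norm_fderivWithin_sq K.uniqueDiffOn_toSet (K.edge_subset_toSet i hx)]
  calc K.diam * ∑ i : Fin 3, ∫ x in K.edge i,
        ‖fderivWithin ℝ v K.toSet x (K.normal i)‖ ^ 2 ∂μH[1]
      ≤ K.diam * ∑ i : Fin 3, ∑ d, ∑ c, ∫ x in K.edge i, g c d x ^ 2 ∂μH[1] :=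
        mul_le_mul_of_nonneg_left (Finset.sum_le_sum fun i _ => hedge i) K.diam_nonneg
    _ = ∑ d, ∑ c, K.diam * bdrySq K (g c d) := by
        simp only [bdrySq, Finset.mul_sum]
        rw [Finset.sum_comm]
        exact Finset.sum_congr rfl fun d _ => Finset.sum_comm
    _ ≤ ∑ d, ∑ c, Cmax ^ 2 * l2Sq K.toSet (g c d) :=
        Finset.sum_le_sum fun d _ => Finset.sum_le_sum fun c _ =>
          hC.diam_mul_bdrySq_le hK (hg c d)
    _ = Cmax ^ 2 * sobSemiVecSq 1 K.toSet v := by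
        simp only [sobSemiVecSq_one, Finset.mul_sum, g]

theorem ellipticity_nonsymmetric_general (M : Mesh) (k : ℕ) (ν τ : ℝ)
    (hν : 0 < ν) (hτ : 0 < τ) (Cmax : ℝ) (hC : TraceConst M k Cmax)
    (v : Vb) (vt : E2 → ℝ) (hv : MemBDM M k v) :
    (1 / (1 + Cmax ^ 2)) * tnormSq M k ν τ v vt ≤ aForm M k ν τ 1 v vt v vt := by
  rw [one_div, inv_mul_le_iff₀ (by positivity), tnormSq, aForm, Finset.mul_sum, Finset.mul_sum]
  refine Finset.sum_le_sum fun K hK => ?_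
  have hgrad :=
    (hv.1 K hK).integral_sum_inner_fderivWithin K.isCompact_toSet K.uniqueDiffOn_toSet
  have htrace := hC.diam_mul_sum_integral_norm_fderivWithin_normal_sq_le hK (hv.1 K hK)
  have hsymm : (∑ i : Fin 3, ∫ x in K.edge i,
        ν * dnt K i (v K) x * (tComp K i (v K) x - vt x) ∂μH[1])
      = ∑ i : Fin 3, ∫ x in K.edge i,
        ν * (tComp K i (v K) x - vt x) * dnt K i (v K) x ∂μH[1] := by
    simp only [mul_right_comm]
  have hstab : 0 ≤ ∑ i : Fin 3, ∫ x in K.edge i,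
      edgeProj (k - 1) (K.edge i) (fun y => tComp K i (v K) y - vt y) x ^ 2 ∂μH[1] :=
    Finset.sum_nonneg fun _ _ => integral_nonneg fun _ => sq_nonneg _
  have hτK : 0 ≤ τ / K.diam := div_nonneg hτ.le K.diam_nonneg
  simp only [integral_const_mul, hgrad, hsymm, one_mul, ← sq]
  linarith [mul_le_mul_of_nonneg_left htrace hν.le,
    mul_nonneg (mul_nonneg (sq_nonneg Cmax) hν.le) (mul_nonneg hτK hstab)]

/-- Lemma 4, case `ε = 1`: ellipticity of `a`. If `ε = 1` then for any
`τ > 0` the form `a` is elliptic on `V_h` with constant `α = 1/(1 + C_max²)`: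
`a((v_h, ṽ_h), (v_h, ṽ_h)) ≥ α |||(v_h, ṽ_h)|||²` for all `(v_h, ṽ_h) ∈ V_h`. -/
theorem ellipticity_nonsymmetric (M : Mesh) (k : ℕ) (hk : 1 ≤ k) (ν τ : ℝ)
    (hν : 0 < ν) (hτ : 0 < τ) (Cmax : ℝ) (hC : TraceConst M k Cmax)
    (v : Vb) (vt : E2 → ℝ) (hv : MemBDM M k v) (hvt : MemM0 M (k - 1) vt) :
    (1 / (1 + Cmax ^ 2)) * tnormSq M k ν τ v vt ≤ aForm M k ν τ 1 v vt v vt :=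
  ellipticity_nonsymmetric_general M k ν τ hν hτ Cmax hC v vt hv

end
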